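/- Let X be a real n×p matrix, y ∈ ℝⁿ, λ₂ > 0, λ a real with 0 ≤ λ ≤ λ_min(XᵀX), Q_λ = XᵀX − λI, and k an integer with 1 ≤ k ≤ p. Define g(c) = inf_{β ∈ ℝᵖ, z ∈ D_z} L_Fenchel(β, z, c). If c* ∈ ℝᵖ attains the supremum of g over ℝᵖ, then there exists β* ∈ ℝᵖ such that c* = (2/(λ₂ + λ)) (Xᵀy − Q_λ β*). -/

import Mathlib

open Matrix Pointwise

noncomputable section

theorem XtX_isHermitian {n p : ℕ} (X : Matrix (Fin n) (Fin p) ℝ) :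
    (Xᵀ * X).IsHermitian := by
  simpa using Matrix.isHermitian_conjTranspose_mul_self X

/-- The smallest eigenvalue `λ_min(XᵀX)`. -/
def lamMin {n p : ℕ} (X : Matrix (Fin n) (Fin p) ℝ) : ℝ :=
  ⨅ i, (XtX_isHermitian X).eigenvalues i

/-- `Q_λ = XᵀX − λ I`. -/
def Qmat {n p : ℕ} (X : Matrix (Fin n) (Fin p) ℝ) (lam : ℝ) : Matrix (Fin p) (Fin p) ℝ :=
  Xᵀ * X - lam • (1 : Matrix (Fin p) (Fin p) ℝ)

/-- The feasible region `D_z = {z : 0 ≤ z_j ≤ 1, Σ_j z_j ≤ k}`. -/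
def Dz (p k : ℕ) : Set (Fin p → ℝ) :=
  {z | (∀ j, 0 ≤ z j ∧ z j ≤ 1) ∧ ∑ j, z j ≤ (k : ℝ)}

/-- `L_Fenchel(β, z, c) = βᵀQ_λβ − 2yᵀXβ + (λ₂+λ) Σ_j (β_j c_j − (c_j²/4) z_j)`. -/
def LFenchel {n p : ℕ} (X : Matrix (Fin n) (Fin p) ℝ) (y : Fin n → ℝ) (lam2 lam : ℝ)
    (β z c : Fin p → ℝ) : ℝ :=
  β ⬝ᵥ (Qmat X lam).mulVec β - 2 * (y ⬝ᵥ X.mulVec β)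
    + (lam2 + lam) * ∑ j, (β j * c j - (c j) ^ 2 / 4 * z j)

lemma Qmat_isHermitian {n p : ℕ} (X : Matrix (Fin n) (Fin p) ℝ) (lam : ℝ) :
    (Qmat X lam).IsHermitian := by
  unfold Qmat
  refine (XtX_isHermitian X).sub ?_
  simp [Matrix.IsHermitian]

lemma Qmat_transpose {n p : ℕ} (X : Matrix (Fin n) (Fin p) ℝ) (lam : ℝ) :
    (Qmat X lam)ᵀ = Qmat X lam := by
  unfold Qmat
  simp [Matrix.transpose_sub, Matrix.transpose_mul, Matrix.transpose_smul]

lemma Qmat_posSemidef {n p : ℕ} (X : Matrix (Fin n) (Fin p) ℝ) (lam : ℝ)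
    (hlam : lam ≤ lamMin X) : (Qmat X lam).PosSemidef := by
  apply (Qmat_isHermitian X lam).posSemidef_iff_eigenvalues_nonneg.mpr
  intro i
  rw [Pi.zero_apply]
  have hmem := (Qmat_isHermitian X lam).eigenvalues_mem_spectrum_real i
  have heq : Qmat X lam = Xᵀ * X - algebraMap ℝ (Matrix (Fin p) (Fin p) ℝ) lam := by
    unfold Qmat; rw [Algebra.algebraMap_eq_smul_one]
  have hspec : spectrum ℝ (Qmat X lam)
      = Set.range (XtX_isHermitian X).eigenvalues - ({lam} : Set ℝ) := by
    rw [heq, ← spectrum.sub_singleton_eq, (XtX_isHermitian X).spectrum_real_eq_range_eigenvalues]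
  rw [hspec] at hmem
  obtain ⟨μ, ⟨j, hj⟩, r, hr, hsub⟩ := Set.mem_sub.mp hmem
  rw [Set.mem_singleton_iff] at hr
  subst hr
  have hbdd : BddBelow (Set.range (XtX_isHermitian X).eigenvalues) :=
    (Set.finite_range _).bddBelow
  have hle : lamMin X ≤ μ := by
    rw [← hj]; exact ciInf_le hbdd j
  linarith [hsub ▸ sub_nonneg.mpr (hlam.trans hle)]


/-- If `c*` attains the supremum of `g(c) = inf_{β, z ∈ D_z} L_Fenchel(β, z, c)`, then
`c* = (2/(λ₂+λ)) (Xᵀy − Q_λ β*)` for some `β*`. -/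
theorem stmt1 {n p : ℕ} (X : Matrix (Fin n) (Fin p) ℝ) (y : Fin n → ℝ)
    (lam2 : ℝ) (hlam2 : 0 < lam2)
    (lam : ℝ) (hlam0 : 0 ≤ lam) (hlam : lam ≤ lamMin X)
    (k : ℕ) (hk1 : 1 ≤ k) (hkp : k ≤ p)
    (g : (Fin p → ℝ) → EReal)
    (hg : ∀ c, g c = ⨅ β : Fin p → ℝ, ⨅ z ∈ Dz p k,
        ((LFenchel X y lam2 lam β z c : ℝ) : EReal))
    (cstar : Fin p → ℝ) (hmax : ∀ c : Fin p → ℝ, g c ≤ g cstar) :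
    ∃ βstar : Fin p → ℝ,
      cstar = (2 / (lam2 + lam)) • (Xᵀ.mulVec y - (Qmat X lam).mulVec βstar) := by
  set κ := lam2 + lam with hκdef
  have hκ : 0 < κ := by positivity
  have hQpsd := Qmat_posSemidef X lam hlam
  have hquad : ∀ x : Fin p → ℝ, 0 ≤ x ⬝ᵥ (Qmat X lam) *ᵥ x := fun x => by
    simpa using hQpsd.dotProduct_mulVec_nonneg x
  have h0Dz : (fun _ => (0:ℝ)) ∈ Dz p k := by
    constructor
    · intro j; norm_num
    · simp
  have hdot : ∀ β : Fin p → ℝ, y ⬝ᵥ X *ᵥ β = (Xᵀ *ᵥ y) ⬝ᵥ β := fun β => by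
    rw [Matrix.dotProduct_mulVec, ← Matrix.mulVec_transpose]
  -- lower bound for g cstar
  set c₀ : Fin p → ℝ := (2 / κ) • (Xᵀ *ᵥ y) with hc₀
  set B : ℝ := -(κ * ∑ j, (c₀ j)^2 / 4) with hB
  have hlow : (B : EReal) ≤ g cstar := by
    refine le_trans ?_ (hmax c₀)
    rw [hg]
    refine le_iInf fun β => le_iInf₂ fun z hz => ?_
    rw [EReal.coe_le_coe_iff]
    have h1 : ∑ j, (β j * c₀ j - (c₀ j)^2/4 * z j)
        = β ⬝ᵥ c₀ - ∑ j, (c₀ j)^2/4 * z j := by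
      rw [Finset.sum_sub_distrib]; rfl
    have h2 : κ * (β ⬝ᵥ c₀) = 2 * (y ⬝ᵥ X *ᵥ β) := by
      rw [hdot, hc₀, dotProduct_smul, dotProduct_comm, smul_eq_mul]
      field_simp
    have h3 : ∑ j, (c₀ j)^2/4 * z j ≤ ∑ j, (c₀ j)^2/4 := by
      apply Finset.sum_le_sum
      intro j _
      nlinarith [(hz.1 j).1, (hz.1 j).2, sq_nonneg (c₀ j)]
    have hL : LFenchel X y lam2 lam β z c₀
        = β ⬝ᵥ (Qmat X lam) *ᵥ β - κ * ∑ j, (c₀ j)^2/4 * z j := by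
      unfold LFenchel
      rw [h1, mul_sub, ← hκdef, h2]; ring
    rw [hL, hB]
    nlinarith [hquad β, hκ, h3]
  -- the key vector
  set v : Fin p → ℝ := Xᵀ *ᵥ y - (κ/2) • cstar with hv
  by_cases hexists : ∃ β : Fin p → ℝ, (Qmat X lam) *ᵥ β = v
  · obtain ⟨β, hβ⟩ := hexists
    refine ⟨β, ?_⟩
    rw [hβ, hv, sub_sub_cancel, smul_smul]
    rw [show 2/κ * (κ/2) = 1 by field_simp, one_smul]
  · exfalso
    have hv_nmem : v ∉ LinearMap.range (Qmat X lam).mulVecLin := by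
      intro hmem
      obtain ⟨β, hβ⟩ := hmem
      exact hexists ⟨β, by simpa using hβ⟩
    obtain ⟨f, hfv, hker⟩ :=
      Submodule.exists_dual_map_eq_bot_of_notMem hv_nmem inferInstance
    have hf0 : ∀ β : Fin p → ℝ, f ((Qmat X lam) *ᵥ β) = 0 := by
      intro β
      have hmem : (Qmat X lam) *ᵥ β ∈ LinearMap.range (Qmat X lam).mulVecLin :=
        ⟨β, by simp⟩
      have := Submodule.mem_map_of_mem (f := f) hmem
      rw [hker] at this
      simpa using this
    set d : Fin p → ℝ := fun j => f (fun i => if j = i then 1 else 0) with hd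
    have hfd : ∀ x : Fin p → ℝ, f x = x ⬝ᵥ d := by
      intro x
      rw [LinearMap.pi_apply_eq_sum_univ f x]
      simp [dotProduct, hd, smul_eq_mul]
    have hQd : (Qmat X lam) *ᵥ d = 0 := by
      have hsym : ∀ β : Fin p → ℝ, β ⬝ᵥ ((Qmat X lam) *ᵥ d) = 0 := by
        intro β
        have h1 : β ⬝ᵥ ((Qmat X lam) *ᵥ d) = ((Qmat X lam) *ᵥ β) ⬝ᵥ d := by
          rw [Matrix.dotProduct_mulVec, ← Matrix.mulVec_transpose, Qmat_transpose]
        rw [h1, ← hfd, hf0]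
      have := hsym ((Qmat X lam) *ᵥ d)
      exact dotProduct_self_eq_zero.mp this
    have hvd : v ⬝ᵥ d ≠ 0 := by rw [← hfd]; exact hfv
    -- upper bound: g cstar ≤ r for every r
    have hup : ∀ r : ℝ, g cstar ≤ (r : EReal) := by
      intro r
      rw [hg]
      set t : ℝ := r / (-2 * (v ⬝ᵥ d)) with ht
      refine le_trans (iInf_le _ (t • d)) ?_
      refine le_trans (iInf₂_le (fun _ => (0:ℝ)) h0Dz) ?_
      rw [EReal.coe_le_coe_iff]
      have hXd : y ⬝ᵥ X *ᵥ d = v ⬝ᵥ d + (κ/2) * (d ⬝ᵥ cstar) := by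
        rw [hdot]
        have hXy : Xᵀ *ᵥ y = v + (κ/2) • cstar := by rw [hv]; abel
        rw [hXy, add_dotProduct, smul_dotProduct, smul_eq_mul,
          dotProduct_comm cstar d]
      have e1 : (Qmat X lam) *ᵥ (t • d) = 0 := by
        rw [Matrix.mulVec_smul, hQd, smul_zero]
      have e3 : ∑ j, ((t • d) j * cstar j - (cstar j)^2/4 * (0:ℝ))
          = t * (d ⬝ᵥ cstar) := by
        simp [dotProduct, Finset.mul_sum, mul_assoc]
      have hL : LFenchel X y lam2 lam (t • d) (fun _ => 0) cstar
          = -2 * t * (v ⬝ᵥ d) := by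
        unfold LFenchel
        rw [e1, dotProduct_zero, Matrix.mulVec_smul, dotProduct_smul,
          smul_eq_mul, hXd, e3, ← hκdef]
        ring
      rw [hL]
      have hteq : -2 * t * (v ⬝ᵥ d) = r := by
        rw [ht]; field_simp
      rw [hteq]
    have := le_trans hlow (hup (B - 1))
    rw [EReal.coe_le_coe_iff] at this
    linarith
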